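/- The angle structure space A_T is a nonempty, convex, bounded subset of ℝ^{3|F|}, and the maximum of 𝓔 over its closure is attained uniquely at the angle structure where every angle equals π/3. -/

import Mathlib

open Real MeasureTheory intervalIntegral

/-- The Lobachevsky function. -/
noncomputable def lob (x : ℝ) : ℝ := -∫ t in (0:ℝ)..x, Real.log |2 * Real.sin t|

/-!
For a fixed sum `s ≤ π`, the map `x ↦ Λ x + Λ (s - x)` has derivative
`log (sin (s - x) / sin x) ≥ 0` on `(0, s / 2)`, strictly positive when `s < π`; so `Λ x + Λ x'`
grows as the pair `x, x'` is moved closer together at fixed sum. For a face with angles `a, b, c`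
where `b` lies between `a` and `c`, first move `(a, c)` to `(π / 3, 2π / 3 - b)` and then
`(b, 2π / 3 - b)` to `(π / 3, π / 3)`; one of the two moves is strict unless all three angles are
`π / 3`. The other claims hold because `A_T` is a product of open triangles in affine planes.
-/

open Set

theorem intervalIntegrable_log_abs_two_mul_sin (a b : ℝ) :
    IntervalIntegrable (fun t => log |2 * sin t|) volume a b := by
  have : AnalyticOnNhd ℝ (fun t => 2 * sin t) (uIcc a b) := fun _ _ =>
    analyticAt_const.mul analyticAt_sin
  simpa only [Real.norm_eq_abs] using this.meromorphicOn.intervalIntegrable_log_norm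

@[fun_prop]
theorem continuous_lob : Continuous lob :=
  (continuous_primitive intervalIntegrable_log_abs_two_mul_sin 0).neg

theorem hasDerivAt_lob {x : ℝ} (hx : sin x ≠ 0) : HasDerivAt lob (-log |2 * sin x|) x := by
  refine (integral_hasDerivAt_right (intervalIntegrable_log_abs_two_mul_sin 0 x) ?_ ?_).neg
  · have : Measurable fun t => log |2 * sin t| := by fun_prop
    exact this.stronglyMeasurable.stronglyMeasurableAtFilter
  · exact (continuous_const.mul continuous_sin).continuousAt.abs.log (by simpa using hx)

theorem sin_le_sin_of_add_le_pi {x y : ℝ} (hx : 0 ≤ x) (hxy : x ≤ y) (h : x + y ≤ π) :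
    sin x ≤ sin y := by
  have hsin : 0 ≤ sin ((y - x) / 2) := sin_nonneg_of_nonneg_of_le_pi (by linarith) (by linarith)
  have hcos : 0 ≤ cos ((y + x) / 2) := cos_nonneg_of_mem_Icc ⟨by linarith [pi_pos], by linarith⟩
  nlinarith [sin_sub_sin y x]

theorem sin_lt_sin_of_add_lt_pi {x y : ℝ} (hx : 0 ≤ x) (hxy : x < y) (h : x + y < π) :
    sin x < sin y := by
  have hsin : 0 < sin ((y - x) / 2) := sin_pos_of_pos_of_lt_pi (by linarith) (by linarith)
  have hcos : 0 < cos ((y + x) / 2) := cos_pos_of_mem_Ioo ⟨by linarith [pi_pos], by linarith⟩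
  nlinarith [sin_sub_sin y x]

theorem hasDerivAt_lob_add_lob_sub {s x : ℝ} (hs : s ≤ π) (hx : x ∈ Ioo 0 (s / 2)) :
    HasDerivAt (fun t => lob t + lob (s - t)) (log (2 * sin (s - x)) - log (2 * sin x)) x := by
  obtain ⟨hx0, hxs⟩ := hx
  have h1 : 0 < sin x := sin_pos_of_pos_of_lt_pi hx0 (by linarith)
  have h2 : 0 < sin (s - x) := sin_pos_of_pos_of_lt_pi (by linarith) (by linarith)
  refine ((hasDerivAt_lob h1.ne').add
    ((hasDerivAt_lob h2.ne').comp x ((hasDerivAt_id x).const_sub s))).congr_deriv ?_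
  rw [abs_of_pos (by positivity), abs_of_pos (by positivity)]
  ring

theorem log_two_mul_sin_le_of_mem_Ioo {s x : ℝ} (hs : s ≤ π) (hx : x ∈ Ioo 0 (s / 2)) :
    log (2 * sin x) ≤ log (2 * sin (s - x)) := by
  obtain ⟨hx0, hxs⟩ := hx
  have h1 : 0 < sin x := sin_pos_of_pos_of_lt_pi hx0 (by linarith)
  exact log_le_log (by positivity)
    (by linarith [sin_le_sin_of_add_le_pi hx0.le (by linarith : x ≤ s - x) (by linarith)])

theorem log_two_mul_sin_lt_of_mem_Ioo {s x : ℝ} (hs : s < π) (hx : x ∈ Ioo 0 (s / 2)) :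
    log (2 * sin x) < log (2 * sin (s - x)) := by
  obtain ⟨hx0, hxs⟩ := hx
  have h1 : 0 < sin x := sin_pos_of_pos_of_lt_pi hx0 (by linarith)
  exact log_lt_log (by positivity)
    (by linarith [sin_lt_sin_of_add_lt_pi hx0.le (by linarith : x < s - x) (by linarith)])

theorem monotoneOn_lob_add_lob_sub {s : ℝ} (hs : s ≤ π) :
    MonotoneOn (fun t => lob t + lob (s - t)) (Icc 0 (s / 2)) := by
  refine monotoneOn_of_deriv_nonneg (convex_Icc _ _) (by fun_prop) ?_ ?_ <;> rw [interior_Icc]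
  · exact fun x hx => (hasDerivAt_lob_add_lob_sub hs hx).differentiableAt.differentiableWithinAt
  · intro x hx
    rw [(hasDerivAt_lob_add_lob_sub hs hx).deriv, sub_nonneg]
    exact log_two_mul_sin_le_of_mem_Ioo hs hx

theorem strictMonoOn_lob_add_lob_sub {s : ℝ} (hs : s < π) :
    StrictMonoOn (fun t => lob t + lob (s - t)) (Icc 0 (s / 2)) := by
  refine strictMonoOn_of_deriv_pos (convex_Icc _ _) (by fun_prop) ?_
  rw [interior_Icc]
  intro x hx
  rw [(hasDerivAt_lob_add_lob_sub hs.le hx).deriv, sub_pos]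
  exact log_two_mul_sin_lt_of_mem_Ioo hs hx

theorem two_mul_min_eq (a b : ℝ) : 2 * min a b = a + b - |a - b| := by
  linarith [min_add_max a b, max_sub_min_eq_abs' a b]

theorem lob_add_lob_eq_min (x x' : ℝ) :
    lob x + lob x' = lob (min x x') + lob (x + x' - min x x') := by
  rcases le_total x x' with h | h
  · rw [min_eq_left h, add_sub_cancel_left]
  · rw [min_eq_right h, add_sub_cancel_right, add_comm]

theorem lob_add_lob_le_of_abs_sub_le {x x' y y' : ℝ} (hx : 0 ≤ x) (hx' : 0 ≤ x')
    (hs : x + x' ≤ π) (hy : y + y' = x + x') (h : |y - y'| ≤ |x - x'|) :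
    lob x + lob x' ≤ lob y + lob y' := by
  have hmx := two_mul_min_eq x x'
  have hmy := two_mul_min_eq y y'
  have h0 : 0 ≤ min x x' := le_min hx hx'
  rw [lob_add_lob_eq_min x, lob_add_lob_eq_min y, hy]
  exact monotoneOn_lob_add_lob_sub hs ⟨h0, by linarith [abs_nonneg (x - x')]⟩
    ⟨by linarith, by linarith [abs_nonneg (y - y')]⟩ (by linarith)

theorem lob_add_lob_lt_of_abs_sub_lt {x x' y y' : ℝ} (hx : 0 ≤ x) (hx' : 0 ≤ x')
    (hs : x + x' < π) (hy : y + y' = x + x') (h : |y - y'| < |x - x'|) :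
    lob x + lob x' < lob y + lob y' := by
  have hmx := two_mul_min_eq x x'
  have hmy := two_mul_min_eq y y'
  have h0 : 0 ≤ min x x' := le_min hx hx'
  rw [lob_add_lob_eq_min x, lob_add_lob_eq_min y, hy]
  exact strictMonoOn_lob_add_lob_sub hs ⟨h0, by linarith [abs_nonneg (x - x')]⟩
    ⟨by linarith, by linarith [abs_nonneg (y - y')]⟩ (by linarith)

theorem lob_add_lob_add_lob_lt_or_eq_of_median {a b c : ℝ} (ha : 0 ≤ a) (hb : 0 ≤ b) (hc : 0 ≤ c)
    (hsum : a + b + c = π) (hmed : (a - b) * (c - b) ≤ 0) :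
    lob a + lob b + lob c < 3 * lob (π / 3) ∨ a = π / 3 ∧ b = π / 3 ∧ c = π / 3 := by
  by_cases hb3 : b = π / 3
  · by_cases ha3 : a = π / 3
    · exact Or.inr ⟨ha3, hb3, by linarith⟩
    have := lob_add_lob_lt_of_abs_sub_lt (y := π / 3) (y' := π / 3) ha hc (by linarith [pi_pos])
      (by linarith) (by rw [sub_self, abs_zero, abs_pos]; intro h; apply ha3; linarith)
    left; rw [hb3]; linarith
  · have hb2 : b ≤ 2 * π / 3 := by nlinarith
    have hpair₁ := lob_add_lob_le_of_abs_sub_le (y := π / 3) (y' := 2 * π / 3 - b) ha hc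
      (by linarith) (by linarith) (by rw [← sq_le_sq]; nlinarith)
    have hpair₂ := lob_add_lob_lt_of_abs_sub_lt (y := π / 3) (y' := π / 3) hb
      (by linarith : 0 ≤ 2 * π / 3 - b) (by linarith [pi_pos]) (by ring)
      (by rw [sub_self, abs_zero, abs_pos]; intro h; apply hb3; linarith)
    left; linarith

theorem exists_median (a b c : ℝ) :
    (a - b) * (c - b) ≤ 0 ∨ (b - a) * (c - a) ≤ 0 ∨ (a - c) * (b - c) ≤ 0 := by
  by_contra! h
  nlinarith [mul_pos (mul_pos h.1 h.2.1) h.2.2, sq_nonneg ((a - b) * (b - c) * (c - a))]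

theorem lob_add_lob_add_lob_lt_or_eq {a b c : ℝ} (ha : 0 ≤ a) (hb : 0 ≤ b) (hc : 0 ≤ c)
    (hsum : a + b + c = π) :
    lob a + lob b + lob c < 3 * lob (π / 3) ∨ a = π / 3 ∧ b = π / 3 ∧ c = π / 3 := by
  rcases exists_median a b c with hmed | hmed | hmed
  · exact lob_add_lob_add_lob_lt_or_eq_of_median ha hb hc hsum hmed
  · refine (lob_add_lob_add_lob_lt_or_eq_of_median hb ha hc (by linarith) hmed).imp
      (fun h => by linarith) (fun h => by tauto)
  · refine (lob_add_lob_add_lob_lt_or_eq_of_median ha hc hb (by linarith) hmed).imp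
      (fun h => by linarith) (fun h => by tauto)

def triangleAngles : Set (Fin 3 → ℝ) :=
  {v | (0 < v 0 ∧ 0 < v 1 ∧ 0 < v 2) ∧ v 0 + v 1 + v 2 = π}

def closedTriangleAngles : Set (Fin 3 → ℝ) :=
  {v | (0 ≤ v 0 ∧ 0 ≤ v 1 ∧ 0 ≤ v 2) ∧ v 0 + v 1 + v 2 = π}

theorem convex_triangleAngles : Convex ℝ triangleAngles := by
  rintro v ⟨⟨hv0, hv1, hv2⟩, hv⟩ w ⟨⟨hw0, hw1, hw2⟩, hw⟩ p q hp hq hpq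
  have hpos : Convex ℝ (Ioi (0 : ℝ)) := convex_Ioi 0
  simp only [triangleAngles, mem_ofPred_eq, Pi.add_apply, Pi.smul_apply]
  exact ⟨⟨hpos hv0 hw0 hp hq hpq, hpos hv1 hw1 hp hq hpq, hpos hv2 hw2 hp hq hpq⟩,
    by simp only [smul_eq_mul]; linear_combination p * hv + q * hw + π * hpq⟩

theorem triangleAngles_subset_Icc : triangleAngles ⊆ Icc 0 (fun _ => π) := by
  rintro v ⟨⟨hv0, hv1, hv2⟩, hv⟩
  refine ⟨fun i => ?_, fun i => ?_⟩ <;> fin_cases i <;> dsimp <;> linarith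

theorem isClosed_closedTriangleAngles : IsClosed closedTriangleAngles := by
  simp only [closedTriangleAngles, ofPred_and]
  refine ((isClosed_le ?_ ?_).inter ((isClosed_le ?_ ?_).inter (isClosed_le ?_ ?_))).inter
    (isClosed_eq ?_ ?_) <;> fun_prop

theorem closure_triangleAngles_subset : closure triangleAngles ⊆ closedTriangleAngles :=
  closure_minimal (fun _ ⟨⟨h0, h1, h2⟩, h⟩ => ⟨⟨h0.le, h1.le, h2.le⟩, h⟩)
    isClosed_closedTriangleAngles

noncomputable def faceEnergy (v : Fin 3 → ℝ) : ℝ := lob (v 0) + lob (v 1) + lob (v 2)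

theorem faceEnergy_lt_or_eq {v : Fin 3 → ℝ} (hv : v ∈ closedTriangleAngles) :
    faceEnergy v < faceEnergy (fun _ => π / 3) ∨ v = fun _ => π / 3 := by
  obtain ⟨⟨h0, h1, h2⟩, hv⟩ := hv
  refine (lob_add_lob_add_lob_lt_or_eq h0 h1 h2 hv).imp (fun h => ?_) (fun h => ?_)
  · simp only [faceEnergy]; linarith
  · funext i; fin_cases i <;> simp [h.1, h.2.1, h.2.2]

theorem setOf_forall_eq_pi_triangleAngles (F : Type*) :
    {A : F → Fin 3 → ℝ | ∀ t, (0 < A t 0 ∧ 0 < A t 1 ∧ 0 < A t 2) ∧ A t 0 + A t 1 + A t 2 = π} =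
      univ.pi fun _ => triangleAngles := by
  ext A; simp [triangleAngles]

theorem angle_structure_space (F : Type*) [Fintype F] :
    letI AT : Set (F → Fin 3 → ℝ) :=
      {A | ∀ t, (0 < A t 0 ∧ 0 < A t 1 ∧ 0 < A t 2) ∧ A t 0 + A t 1 + A t 2 = Real.pi}
    letI energy : (F → Fin 3 → ℝ) → ℝ :=
      fun A => ∑ t, (lob (A t 0) + lob (A t 1) + lob (A t 2))
    AT.Nonempty ∧ Convex ℝ AT ∧ Bornology.IsBounded AT ∧
      ((fun _ _ => Real.pi / 3) ∈ closure AT ∧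
        ∀ A ∈ closure AT, A ≠ (fun _ _ => Real.pi / 3) →
          energy A < energy (fun _ _ => Real.pi / 3)) := by
  have hcenter : (fun _ _ => π / 3) ∈ univ.pi fun (_ : F) => triangleAngles :=
    fun _ _ => ⟨⟨by positivity, by positivity, by positivity⟩, by ring⟩
  rw [setOf_forall_eq_pi_triangleAngles, closure_pi_set]
  refine ⟨⟨_, hcenter⟩, convex_pi fun _ _ => convex_triangleAngles,
    .pi fun _ => (Metric.isBounded_Icc _ _).subset triangleAngles_subset_Icc,
    fun t _ => subset_closure (hcenter t trivial), fun A hA hne => ?_⟩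
  have hface t : A t ∈ closedTriangleAngles := closure_triangleAngles_subset (hA t trivial)
  obtain ⟨t₀, ht₀⟩ : ∃ t, A t ≠ fun _ => π / 3 := by
    by_contra! h; exact hne (funext h)
  refine Finset.sum_lt_sum (fun t _ => ?_)
    ⟨t₀, Finset.mem_univ _, (faceEnergy_lt_or_eq (hface t₀)).resolve_right ht₀⟩
  rcases faceEnergy_lt_or_eq (hface t) with h | h
  · exact h.le
  · exact (congrArg faceEnergy h).le
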